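/- Let R and S be rings, and let M be an (R,S)-bimodule that has finite uniform (Goldie) rank as a left R-module and is torsionfree as a right S-module over a semiprime right Goldie ring S. Let N be a left R-module and f : M → N an R-module homomorphism whose kernel is not essential in M. Then Hom_R(M,N), as a left S-module, is not torsion; i.e., there is no regular element c of S with c·f = 0. -/

import Mathlib

/-! STATEMENT 10.  Right `S`-modules are modules over `Sᵐᵒᵖ`. -/

section Defs

variable (S : Type) [Ring S]

/-- A regular element of a ring: a two-sided non-zero-divisor. -/
def IsRegElem (c : S) : Prop := (∀ x : S, x * c = 0 → x = 0) ∧ (∀ x : S, c * x = 0 → x = 0)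

/-- A ring is semiprime if it has no nonzero nilpotent (two-sided) ideals; elementwise:
`a S a = 0` implies `a = 0`. -/
def IsSemiprimeRing : Prop := ∀ a : S, (∀ s : S, a * s * a = 0) → a = 0

/-- The right annihilator of a subset of `S`. -/
def rightAnn (X : Set S) : Set S := { s | ∀ x ∈ X, x * s = 0 }

/-- `S` satisfies the ascending chain condition on right annihilators. -/
def ACCRightAnn : Prop :=
  ∀ f : ℕ → Set S, (∀ n, ∃ X, f n = rightAnn S X) → (∀ n, f n ⊆ f (n + 1)) →
    ∃ N, ∀ m, N ≤ m → f m = f N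

end Defs

section ModDefs

variable (R : Type) [Ring R] (M : Type) [AddCommGroup M] [Module R M]

/-- A submodule is essential if it meets every nonzero submodule nontrivially. -/
def IsEssentialSub (K : Submodule R M) : Prop :=
  ∀ L : Submodule R M, L ≠ ⊥ → K ⊓ L ≠ ⊥

/-- `M` has uniform (Goldie) rank at most `n`: there is no independent family of `n + 1`
nonzero submodules. -/
def UniformRankLE (n : ℕ) : Prop :=
  ∀ g : Fin (n + 1) → Submodule R M, (∀ i, g i ≠ ⊥) → ¬ iSupIndep g

/-- `M` has finite uniform (Goldie) rank. -/
def FiniteUniformRank : Prop := ∃ n, UniformRankLE R M n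

end ModDefs

/-- A right `S`-module `M` is torsionfree if no nonzero element is killed by a regular
element of `S`. -/
def RightTorsionfree (S : Type) [Ring S] (M : Type) [AddCommGroup M] [Module Sᵐᵒᵖ M] : Prop :=
  ∀ (m : M) (c : S), IsRegElem S c → MulOpposite.op c • m = 0 → m = 0

/-- A right Goldie ring: finite uniform rank as a right module over itself, and the
ascending chain condition on right annihilators. -/
def IsRightGoldie (S : Type) [Ring S] : Prop :=
  FiniteUniformRank Sᵐᵒᵖ S ∧ ACCRightAnn S

/-! Torsionfreeness makes `m ↦ m c` injective.  If `f (M c) = 0` and `L ∩ ker f = 0`, then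
`L ∩ M c = 0`, so `L cᵏ` meets `M cᵏ⁺¹ ⊇ L cᵏ⁺¹ + L cᵏ⁺² + ⋯` only in `0`: the submodules
`L, L c, L c², …` are independent and all nonzero when `L ≠ 0`, against finite uniform rank. -/

namespace Module.End

variable {R M : Type} [Ring R] [AddCommGroup M] [Module R M]

theorem injective_pow {φ : Module.End R M} (hφ : Function.Injective φ) (k : ℕ) :
    Function.Injective (φ ^ k) := by
  simpa only [coe_pow] using hφ.iterate k

theorem disjoint_map_pow_range_pow_succ {φ : Module.End R M} (hφ : Function.Injective φ)
    {L : Submodule R M} (hL : Disjoint L (LinearMap.range φ)) (k : ℕ) :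
    Disjoint (L.map (φ ^ k)) (LinearMap.range (φ ^ (k + 1))) := by
  rw [pow_succ, mul_eq_comp, LinearMap.range_comp]
  exact Submodule.disjoint_map (injective_pow hφ k) hL

theorem iSupIndep_map_pow {φ : Module.End R M} (hφ : Function.Injective φ)
    {L : Submodule R M} (hL : Disjoint L (LinearMap.range φ)) :
    iSupIndep fun k : ℕ => L.map (φ ^ k) := by
  classical
  rw [iSupIndep_iff_supIndep]
  intro s
  induction s using Finset.induction_on_min with
  | empty => exact Finset.supIndep_empty _
  | insert a s hlt ih =>
    refine ih.insert ((disjoint_map_pow_range_pow_succ hφ hL a).mono_right ?_)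
    exact Finset.sup_le fun k hk =>
      LinearMap.map_le_range.trans (φ.iterateRange.monotone (hlt k hk))

end Module.End

theorem FiniteUniformRank.exists_eq_bot_of_iSupIndep {R M : Type} [Ring R] [AddCommGroup M]
    [Module R M] (hM : FiniteUniformRank R M) {g : ℕ → Submodule R M} (hg : iSupIndep g) :
    ∃ k, g k = ⊥ := by
  obtain ⟨n, hn⟩ := hM
  by_contra! hne
  exact hn (g ∘ Fin.val) (fun i => hne i) (hg.comp Fin.val_injective)

theorem RightTorsionfree.smul_injective {S M : Type} [Ring S] [AddCommGroup M] [Module Sᵐᵒᵖ M]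
    (hM : RightTorsionfree S M) {c : S} (hc : IsRegElem S c) :
    Function.Injective (MulOpposite.op c • · : M → M) := fun a b hab =>
  sub_eq_zero.mp (hM (a - b) c hc (by rw [smul_sub, sub_eq_zero]; exact hab))

theorem hom_not_torsion_general (R S : Type) [Ring R] [Ring S]
    (M : Type) [AddCommGroup M] [Module R M] [Module Sᵐᵒᵖ M] [SMulCommClass R Sᵐᵒᵖ M]
    (hrank : FiniteUniformRank R M) (htf : RightTorsionfree S M)
    (N : Type) [AddCommGroup N] [Module R N]
    (f : M →ₗ[R] N) (hker : ¬ IsEssentialSub R M (LinearMap.ker f)) :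
    ¬ ∃ c : S, IsRegElem S c ∧ ∀ m : M, f (MulOpposite.op c • m) = 0 := by
  rintro ⟨c, hc, hfc⟩
  obtain ⟨L, hL, hLker⟩ : ∃ L : Submodule R M, L ≠ ⊥ ∧ Disjoint L (LinearMap.ker f) := by
    simpa [IsEssentialSub, disjoint_iff, inf_comm] using hker
  have := SMulCommClass.symm R Sᵐᵒᵖ M
  set φ := DistribSMul.toLinearMap R M (MulOpposite.op c)
  have hφ : Function.Injective φ := htf.smul_injective hc
  have hLφ : Disjoint L (LinearMap.range φ) := by
    refine hLker.mono_right ?_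
    rintro _ ⟨m, rfl⟩
    exact hfc m
  obtain ⟨k, hk⟩ := hrank.exists_eq_bot_of_iSupIndep (Module.End.iSupIndep_map_pow hφ hLφ)
  exact hL (Submodule.map_injective_of_injective (Module.End.injective_pow hφ k)
    (hk.trans (Submodule.map_bot _).symm))

/-- Let `R`, `S` be rings, `S` semiprime right Goldie, and let `M` be an
`(R,S)`-bimodule with finite uniform rank as a left `R`-module which is torsionfree as a
right `S`-module.  Let `N` be a left `R`-module and `f : M → N` an `R`-homomorphism whose
kernel is not essential in `M`.  Then `Hom_R(M,N)` is not torsion as a left `S`-module: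
there is no regular element `c` of `S` with `c · f = 0` (where `(c · f)(m) = f(m c)`). -/
theorem hom_not_torsion (R S : Type) [Ring R] [Ring S]
    (hSsp : IsSemiprimeRing S) (hSG : IsRightGoldie S)
    (M : Type) [AddCommGroup M] [Module R M] [Module Sᵐᵒᵖ M] [SMulCommClass R Sᵐᵒᵖ M]
    (hrank : FiniteUniformRank R M) (htf : RightTorsionfree S M)
    (N : Type) [AddCommGroup N] [Module R N]
    (f : M →ₗ[R] N) (hker : ¬ IsEssentialSub R M (LinearMap.ker f)) :
    ¬ ∃ c : S, IsRegElem S c ∧ ∀ m : M, f (MulOpposite.op c • m) = 0 :=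
  hom_not_torsion_general R S M hrank htf N f hker
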